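/- On a board of isolated stacks of heights one and two where every group has two or four tiles and no blocked cycle is present, for every group that has a match (two playable tiles), at least one match of that group can be played such that the resulting board again contains no blocked cycle. -/

import Mathlib

/-- A board is a finite multiset of isolated stacks; each stack is a list of
tile groups, with the head of the list being the top tile of the stack. -/
abbrev Board (G : Type*) := Multiset (List G)

variable {G : Type*} [DecidableEq G]

/-- The number of tiles of group `g` remaining on the board. -/
def tileCount (B : Board G) (g : G) : ℕ := (B.map (fun s => s.count g)).sum

/-- The total number of tiles on the board. -/
def totalTiles (B : Board G) : ℕ := (B.map List.length).sum

/-- The board obtained by removing the (playable) top tiles of stacks `s₁` and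
`s₂`, the remaining stacks being `rest`; emptied stacks disappear. -/
def play (s₁ s₂ : List G) (rest : Board G) : Board G :=
  Multiset.filter (fun s => s ≠ []) (s₁.tail ::ₘ s₂.tail ::ₘ rest)

/-- A legal move: remove two playable (top) tiles of the same group. -/
def Move (B B' : Board G) : Prop :=
  ∃ (g : G) (s₁ s₂ : List G) (rest : Board G),
    B = s₁ ::ₘ s₂ ::ₘ rest ∧ s₁.head? = some g ∧ s₂.head? = some g ∧
    B' = play s₁ s₂ rest

/-- A board is solvable iff some sequence of legal moves empties it. -/
def Solvable (B : Board G) : Prop := Relation.ReflTransGen Move B 0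

/-- All stacks are nonempty and of height at most two. -/
def HeightsOK (B : Board G) : Prop := ∀ s ∈ B, s ≠ [] ∧ s.length ≤ 2

/-- A blocked cycle: distinct groups `p 0, …, p k`, each with exactly two
remaining tiles, such that for each `i` there is a height-two stack with a
`p (i+1)`-tile (cyclically) on top of a `p i`-tile. -/
def BlockedCycle (B : Board G) {k : ℕ} (p : Fin (k + 1) → G) : Prop :=
  Function.Injective p ∧ (∀ i, tileCount B (p i) = 2) ∧
    ∀ i, [p (i + 1), p i] ∈ B

/-- The board contains some blocked cycle. -/
def HasBlockedCycle (B : Board G) : Prop :=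
  ∃ (k : ℕ) (p : Fin (k + 1) → G), BlockedCycle B p

/-! When a match of `g` is played, a blocked cycle of the new board that avoids `g` was already
a blocked cycle before, so every new cycle passes through `g`, along height-two stacks
`[x, g]` and `[g, y]`, and uses both remaining `g`-tiles.

If a stack `[g, g]` exists, playing its top tile leaves a third `g`-tile, so no cycle can form.
Otherwise, if playing `s₁, s₂` creates a cycle `g, x, …, y, g`, play `s₁` with the top of
`[g, y]` instead. A new cycle `g, x', …, y', g` must leave `g` through the only remaining
`[x, g]` and return through `s₂ = [g, y']`. A group with two tiles lying on top of a stack has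
at most one tile above it, so the path above `x` is determined and `y' = y`; but then `y` lies
under `g` twice and on top of a stack once, three tiles in all. -/

section Counting

variable {M : Board G} {u : G}

@[simp]
lemma tileCount_cons (s : List G) : tileCount (s ::ₘ M) u = s.count u + tileCount M u := by
  simp [tileCount]

lemma count_le_tileCount {s : List G} (hs : s ∈ M) : s.count u ≤ tileCount M u :=
  Multiset.le_sum_of_mem (Multiset.mem_map_of_mem _ hs)

lemma count_add_count_le_tileCount {s t : List G} (hs : s ∈ M) (ht : t ∈ M) (hst : s ≠ t) :
    s.count u + t.count u ≤ tileCount M u := by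
  obtain ⟨M', rfl⟩ := Multiset.exists_cons_of_mem hs
  have ht' : t ∈ M' := (Multiset.mem_cons.mp ht).resolve_left (Ne.symm hst)
  simpa using count_le_tileCount ht'

lemma two_le_tileCount {v w : G} (hv : [v, u] ∈ M) (hw : [u, w] ∈ M) : 2 ≤ tileCount M u := by
  by_cases hvu : v = u
  · subst hvu
    simpa using count_le_tileCount (u := v) hv
  · have hne : [v, u] ≠ [u, w] := by simp [hvu]
    have := count_add_count_le_tileCount (u := u) hv hw hne
    simp [List.count_cons] at this
    omega

lemma eq_of_tileCount_eq_two {v v' w : G} (hu : tileCount M u = 2) (hv : [v, u] ∈ M)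
    (hv' : [v', u] ∈ M) (hw : [u, w] ∈ M) : v = v' := by
  by_contra hne
  obtain ⟨M', rfl⟩ := Multiset.exists_cons_of_mem hv
  have hv'M' : [v', u] ∈ M' := (Multiset.mem_cons.mp hv').resolve_left (by simp [Ne.symm hne])
  rcases Multiset.mem_cons.mp hw with hwv | hwM'
  · obtain ⟨rfl, rfl⟩ : u = w ∧ u = v := by simp at hwv; exact ⟨hwv.2.symm, hwv.1⟩
    have := count_le_tileCount (u := u) hv'M'
    simp [List.count_cons] at hu this
    omega
  · have := two_le_tileCount hv'M' hwM'
    simp [List.count_cons] at hu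
    omega

end Counting

lemma Multiset.exists_cons_cons_eq_of_mem {α : Type*} {s₁ s₂ c : α} {rest : Multiset α}
    (hc : c ∈ s₁ ::ₘ s₂ ::ₘ rest) :
    ∃ t rest', s₁ ::ₘ s₂ ::ₘ rest = c ::ₘ t ::ₘ rest' ∧ (t = s₁ ∨ t = s₂) := by
  rcases Multiset.mem_cons.mp hc with rfl | hc
  · exact ⟨s₂, rest, rfl, Or.inr rfl⟩
  rcases Multiset.mem_cons.mp hc with rfl | hc
  · exact ⟨s₁, rest, Multiset.cons_swap _ _ _, Or.inl rfl⟩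
  obtain ⟨r, rfl⟩ := Multiset.exists_cons_of_mem hc
  refine ⟨s₁, s₂ ::ₘ r, ?_, Or.inl rfl⟩
  rw [Multiset.cons_swap s₂ c, Multiset.cons_swap s₁ c]

lemma Multiset.subset_of_eq_cons_cons {α : Type*} {B rest : Multiset α} {s₁ s₂ : α}
    (hB : B = s₁ ::ₘ s₂ ::ₘ rest) : rest ⊆ B :=
  fun _ hs => hB ▸ Multiset.mem_cons_of_mem (Multiset.mem_cons_of_mem hs)

section Play

variable {s₁ s₂ : List G} {rest : Board G} {g : G}

lemma tileCount_play (u : G) :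
    tileCount (play s₁ s₂ rest) u = s₁.tail.count u + s₂.tail.count u + tileCount rest u := by
  have filter_ne_nil : ∀ M : Board G, tileCount (M.filter (· ≠ [])) u = tileCount M u := by
    intro M
    induction M using Multiset.induction with
    | empty => rfl
    | cons s M ih => by_cases hs : s = [] <;> simp [hs, ih]
  simp only [play, filter_ne_nil, tileCount_cons]
  omega

lemma tileCount_play_of_ne (h₁ : s₁.head? = some g) (h₂ : s₂.head? = some g) {u : G}
    (hu : u ≠ g) : tileCount (play s₁ s₂ rest) u = tileCount (s₁ ::ₘ s₂ ::ₘ rest) u := by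
  obtain ⟨t₁, rfl⟩ := List.head?_eq_some_iff.mp h₁
  obtain ⟨t₂, rfl⟩ := List.head?_eq_some_iff.mp h₂
  simp [tileCount_play, Ne.symm hu]
  omega

lemma mem_of_mem_play {α : Type*} {s₁ s₂ : List α} {rest : Board α} {v w : α}
    (hl₁ : s₁.length ≤ 2) (hl₂ : s₂.length ≤ 2) (h : [v, w] ∈ play s₁ s₂ rest) :
    [v, w] ∈ rest := by
  have tail_ne : ∀ s : List α, s.length ≤ 2 → s.tail ≠ [v, w] := fun s hs h' => by
    have := congrArg List.length h'
    simp at this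
    omega
  rcases Multiset.mem_cons.mp (Multiset.mem_filter.mp h).1 with h' | h'
  · exact absurd h'.symm (tail_ne s₁ hl₁)
  rcases Multiset.mem_cons.mp h' with h' | h'
  · exact absurd h'.symm (tail_ne s₂ hl₂)
  exact h'

end Play

/-- `a` is a walk `g = a 0, a 1, …, a (k + 1) = g` along height-two stacks `[a (l + 1), a l]`
of `M` whose inner vertices are groups other than `g` with two tiles in `B`. -/
structure IsBlockedLoop (M B : Board G) (g : G) (k : ℕ) (a : ℕ → G) : Prop where
  zero : a 0 = g
  last : a (k + 1) = g
  mem : ∀ l, [a (l + 1), a l] ∈ M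
  ne : ∀ l, 1 ≤ l → l ≤ k → a l ≠ g
  tileCount_eq : ∀ l, 1 ≤ l → l ≤ k → tileCount B (a l) = 2

namespace IsBlockedLoop

variable {M M' B : Board G} {g : G} {k k' : ℕ} {a a' : ℕ → G}

lemma mono (ha : IsBlockedLoop M B g k a) (hM : M ⊆ M') : IsBlockedLoop M' B g k a :=
  { ha with mem := fun l => hM (ha.mem l) }

lemma one_le (ha : IsBlockedLoop M B g k a) (hgg : [g, g] ∉ M) : 1 ≤ k := by
  by_contra hk
  obtain rfl : k = 0 := by omega
  exact hgg (by simpa [ha.zero, ha.last] using ha.mem 0)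

lemma eq_of_cons_cons {s₂ : List G} {x : G} {r : Board G}
    (ha : IsBlockedLoop (s₂ ::ₘ [x, g] ::ₘ r) B g k a) (h₂ : s₂.head? = some g)
    (hr : ∀ s ∈ r, g ∉ s) (hk : 1 ≤ k) : a 1 = x ∧ s₂ = [g, a k] := by
  have hfirst := ha.ne 1 le_rfl hk
  have hlast := ha.ne k hk le_rfl
  constructor
  · rcases Multiset.mem_cons.mp (ha.zero ▸ ha.mem 0) with h | h
    · exact absurd (by simpa [← h] using h₂) hfirst
    rcases Multiset.mem_cons.mp h with h | h
    · exact (List.cons.inj h).1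
    · exact absurd (by simp) (hr _ h)
  · rcases Multiset.mem_cons.mp (ha.last ▸ ha.mem k) with h | h
    · exact h.symm
    rcases Multiset.mem_cons.mp h with h | h
    · exact absurd (List.cons.inj (List.cons.inj h).2).1 hlast
    · exact absurd (by simp) (hr _ h)

lemma last_eq_of_le (ha : IsBlockedLoop B B g k a) (ha' : IsBlockedLoop B B g k' a')
    (h₁ : a 1 = a' 1) (hk : k ≤ k') : a k = a' k' := by
  have agree : ∀ l ≤ k, a l = a' l ∧ a (l + 1) = a' (l + 1) := by
    intro l
    induction l with
    | zero => exact fun _ => ⟨ha.zero.trans ha'.zero.symm, h₁⟩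
    | succ l ih =>
      intro hl
      obtain ⟨-, hl₁⟩ := ih (by omega)
      exact ⟨hl₁, eq_of_tileCount_eq_two (ha.tileCount_eq (l + 1) (by omega) hl) (ha.mem (l + 1))
        (hl₁ ▸ ha'.mem (l + 1)) (ha.mem l)⟩
  obtain rfl : k = k' := by
    by_contra hne
    exact ha'.ne (k + 1) (by omega) (by omega) ((agree k le_rfl).2 ▸ ha.last)
  exact (agree k le_rfl).1

lemma last_eq (ha : IsBlockedLoop B B g k a) (ha' : IsBlockedLoop B B g k' a')
    (h₁ : a 1 = a' 1) : a k = a' k' := by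
  rcases le_total k k' with hk | hk
  · exact ha.last_eq_of_le ha' h₁ hk
  · exact (ha'.last_eq_of_le ha h₁.symm hk).symm

end IsBlockedLoop

open Fin.NatCast in
lemma BlockedCycle.isBlockedLoop {M : Board G} {k : ℕ} {p : Fin (k + 1) → G}
    (hp : BlockedCycle M p) {i : Fin (k + 1)} {g : G} (hi : p i = g) :
    IsBlockedLoop M M g k (fun l => p (i + l)) where
  zero := by simpa using hi
  last := by simpa using hi
  mem l := by simpa [Nat.cast_succ, add_assoc] using hp.2.2 (i + l)
  ne l h₁ h₂ h := by
    rw [← hi] at h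
    have h0 := hp.1 h
    rw [add_eq_left, Fin.natCast_eq_zero] at h0
    exact absurd (Nat.le_of_dvd (by omega) h0) (by omega)
  tileCount_eq l _ _ := hp.2.1 _

section Moves

variable {B : Board G} {g : G}

lemma exists_isBlockedLoop_of_play {s₁ s₂ : List G} {rest : Board G}
    (hB : B = s₁ ::ₘ s₂ ::ₘ rest) (h₁ : s₁.head? = some g) (h₂ : s₂.head? = some g)
    (hl₁ : s₁.length ≤ 2) (hl₂ : s₂.length ≤ 2) (hnc : ¬ HasBlockedCycle B)
    (hP : HasBlockedCycle (play s₁ s₂ rest)) :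
    tileCount (play s₁ s₂ rest) g = 2 ∧ ∃ k a, IsBlockedLoop rest B g k a := by
  obtain ⟨k, p, hp⟩ := hP
  by_cases hg : ∃ i, p i = g
  · obtain ⟨i, hi⟩ := hg
    have hloop := hp.isBlockedLoop hi
    refine ⟨hi ▸ hp.2.1 i, k, _, ⟨hloop.zero, hloop.last, fun l => ?_, hloop.ne, fun l h h' => ?_⟩⟩
    · exact mem_of_mem_play hl₁ hl₂ (hloop.mem l)
    · rw [hB, ← tileCount_play_of_ne h₁ h₂ (hloop.ne l h h')]
      exact hloop.tileCount_eq l h h'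
  · simp only [not_exists] at hg
    refine absurd ⟨k, p, hp.1, fun i => ?_, fun i => ?_⟩ hnc
    · rw [hB, ← tileCount_play_of_ne h₁ h₂ (hg i)]
      exact hp.2.1 i
    · rw [hB]
      exact Multiset.mem_cons_of_mem (Multiset.mem_cons_of_mem (mem_of_mem_play hl₁ hl₂ (hp.2.2 i)))

lemma not_hasBlockedCycle_play_pair {t : List G} {rest : Board G}
    (hB : B = [g, g] ::ₘ t ::ₘ rest) (ht : t.head? = some g) (hlt : t.length ≤ 2)
    (hnc : ¬ HasBlockedCycle B) : ¬ HasBlockedCycle (play [g, g] t rest) := by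
  intro hP
  obtain ⟨hcount, k, a, ha⟩ := exists_isBlockedLoop_of_play hB rfl ht (by simp) hlt hnc hP
  have hrest : 2 ≤ tileCount rest g :=
    two_le_tileCount (ha.zero ▸ ha.mem 0) (ha.last ▸ ha.mem k)
  rw [tileCount_play] at hcount
  simp at hcount
  omega

lemma exists_play_not_hasBlockedCycle {s₁ s₂ : List G} {rest : Board G}
    (hlen : ∀ s ∈ B, s.length ≤ 2) (hnc : ¬ HasBlockedCycle B) (hgg : [g, g] ∉ B)
    (hB : B = s₁ ::ₘ s₂ ::ₘ rest) (h₁ : s₁.head? = some g) (h₂ : s₂.head? = some g) :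
    ∃ t rest', B = s₁ ::ₘ t ::ₘ rest' ∧ t.head? = some g ∧
      ¬ HasBlockedCycle (play s₁ t rest') := by
  have hl₁ : s₁.length ≤ 2 := hlen s₁ (by simp [hB])
  by_cases hP₁ : HasBlockedCycle (play s₁ s₂ rest)
  swap
  · exact ⟨s₂, rest, hB, h₂, hP₁⟩
  obtain ⟨hcount, k, a, ha⟩ :=
    exists_isBlockedLoop_of_play hB h₁ h₂ hl₁ (hlen s₂ (by simp [hB])) hnc hP₁
  have hsub := Multiset.subset_of_eq_cons_cons hB
  have hk := ha.one_le fun h => hgg (hsub h)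
  have hx : a 1 ≠ g := ha.ne 1 le_rfl hk
  obtain ⟨r, hrest⟩ : ∃ r, rest = [g, a k] ::ₘ [a 1, g] ::ₘ r := by
    obtain ⟨r', hr'⟩ := Multiset.exists_cons_of_mem (ha.last ▸ ha.mem k)
    have hxg : [a 1, g] ∈ r' := by
      have := ha.zero ▸ ha.mem 0
      rw [hr'] at this
      exact (Multiset.mem_cons.mp this).resolve_left (by simp [hx])
    obtain ⟨r, rfl⟩ := Multiset.exists_cons_of_mem hxg
    exact ⟨r, hr'⟩
  have hr : ∀ s ∈ r, g ∉ s := fun s hs hgs => by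
    have := count_le_tileCount (u := g) hs
    rw [tileCount_play, hrest] at hcount
    simp [hx, Ne.symm hx, Ne.symm (ha.ne k hk le_rfl)] at hcount
    have := List.count_pos_iff.mpr hgs
    omega
  have hB₂ : B = s₁ ::ₘ [g, a k] ::ₘ (s₂ ::ₘ [a 1, g] ::ₘ r) := by
    rw [hB, hrest, Multiset.cons_swap s₂]
  by_cases hP₂ : HasBlockedCycle (play s₁ [g, a k] (s₂ ::ₘ [a 1, g] ::ₘ r))
  swap
  · exact ⟨_, _, hB₂, rfl, hP₂⟩
  exfalso
  obtain ⟨-, k', a', ha'⟩ := exists_isBlockedLoop_of_play hB₂ h₁ rfl hl₁ (by simp) hnc hP₂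
  have hsub₂ := Multiset.subset_of_eq_cons_cons hB₂
  obtain ⟨hfirst, hs₂⟩ := ha'.eq_of_cons_cons h₂ hr (ha'.one_le fun h => hgg (hsub₂ h))
  have hyy : a k = a' k' := (ha.mono hsub).last_eq (ha'.mono hsub₂) hfirst.symm
  have hy : tileCount B (a k) = 2 := ha.tileCount_eq k hk le_rfl
  have hy_rest : 2 ≤ tileCount rest (a k) :=
    two_le_tileCount (ha.last ▸ ha.mem k) (by simpa [Nat.sub_add_cancel hk] using ha.mem (k - 1))
  rw [hB, tileCount_cons, tileCount_cons, hs₂, ← hyy] at hy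
  have : 1 ≤ [g, a k].count (a k) := List.count_pos_iff.mpr (by simp)
  omega

end Moves

theorem stmt3_general (B : Board G) (hH : HeightsOK B)
    (hnc : ¬ HasBlockedCycle B) (g : G)
    (hmatch : ∃ (s₁ s₂ : List G) (rest : Board G),
      B = s₁ ::ₘ s₂ ::ₘ rest ∧ s₁.head? = some g ∧ s₂.head? = some g) :
    ∃ (s₁ s₂ : List G) (rest : Board G),
      B = s₁ ::ₘ s₂ ::ₘ rest ∧ s₁.head? = some g ∧ s₂.head? = some g ∧
      ¬ HasBlockedCycle (play s₁ s₂ rest) := by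
  obtain ⟨s₁, s₂, rest, hB, h₁, h₂⟩ := hmatch
  have hlen : ∀ s ∈ B, s.length ≤ 2 := fun s hs => (hH s hs).2
  by_cases hgg : [g, g] ∈ B
  · obtain ⟨t, rest', hB', ht⟩ := Multiset.exists_cons_cons_eq_of_mem (hB ▸ hgg)
    have htg : t.head? = some g := by rcases ht with rfl | rfl <;> assumption
    have hB'' : B = [g, g] ::ₘ t ::ₘ rest' := hB.trans hB'
    exact ⟨[g, g], t, rest', hB'', rfl, htg,
      not_hasBlockedCycle_play_pair hB'' htg (hlen t (by simp [hB''])) hnc⟩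
  · obtain ⟨t, rest', hB', ht, hP⟩ := exists_play_not_hasBlockedCycle hlen hnc hgg hB h₁ h₂
    exact ⟨s₁, t, rest', hB', h₁, ht, hP⟩

/-- on a cycle-free board (stacks of heights one and two, groups of
size two or four), every group having a match has a match whose play leaves the
board cycle-free. -/
theorem stmt3 (B : Board G) (hH : HeightsOK B)
    (hs : ∀ g : G, tileCount B g = 0 ∨ tileCount B g = 2 ∨ tileCount B g = 4)
    (hnc : ¬ HasBlockedCycle B) (g : G)
    (hmatch : ∃ (s₁ s₂ : List G) (rest : Board G),
      B = s₁ ::ₘ s₂ ::ₘ rest ∧ s₁.head? = some g ∧ s₂.head? = some g) :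
    ∃ (s₁ s₂ : List G) (rest : Board G),
      B = s₁ ::ₘ s₂ ::ₘ rest ∧ s₁.head? = some g ∧ s₂.head? = some g ∧
      ¬ HasBlockedCycle (play s₁ s₂ rest) :=
  stmt3_general B hH hnc g hmatch
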